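/- In any fair-division-with-social-impact instance with additive social impacts, if A is a SIM allocation, then for every pair of agents i, j it holds that s_i(A_j) ≤ s_j(A_j). Consequently, if in the definition of SA-EF the strict inequality s_i(A_j) < s_j(A_j) is replaced by the non-strict inequality s_i(A_j) ≤ s_j(A_j), then every SIM allocation satisfies the resulting condition for every pair of agents. -/

import Mathlib

/-
Moving the whole bundle of agent `j` to agent `i` changes the total social impact by
`s_i(A_j) - s_j(A_j)` and leaves every other item in place, so at a SIM allocation this
difference cannot be positive.
-/

open Finset

variable {N M : Type*}

/-- The bundle of agent `i` under allocation `A` (items mapped to `i`). -/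
def bundle [Fintype M] [DecidableEq N] (A : M → N) (i : N) : Finset M :=
  Finset.univ.filter fun g => A g = i

/-- The (additive) value of a bundle `S` under the item-values `f`. -/
def val (f : M → ℕ) (S : Finset M) : ℕ := ∑ g ∈ S, f g

/-- An allocation is social impact maximizing (SIM). -/
def SIM [Fintype N] [Fintype M] [DecidableEq N] (s : N → M → ℕ) (A : M → N) : Prop :=
  ∀ A' : M → N, ∑ i : N, val (s i) (bundle A i) ≥ ∑ i : N, val (s i) (bundle A' i)

section Reassign

variable [Fintype M] [DecidableEq N]

lemma sum_val_bundle [Fintype N] (s : N → M → ℕ) (A : M → N) :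
    ∑ i : N, val (s i) (bundle A i) = ∑ g : M, s (A g) g := by
  rw [← Finset.sum_fiberwise Finset.univ A fun g => s (A g) g]
  refine Finset.sum_congr rfl fun i _ => Finset.sum_congr rfl fun g hg => ?_
  rw [(Finset.mem_filter.mp hg).2]

lemma val_bundle_eq_sum_filter (s : N → M → ℕ) (A : M → N) (j : N) :
    val (s j) (bundle A j) = ∑ g ∈ univ.filter (fun g => A g = j), s (A g) g :=
  Finset.sum_congr rfl fun g hg => by rw [(Finset.mem_filter.mp hg).2]

def reassign (A : M → N) (j i : N) : M → N :=
  fun g => if A g = j then i else A g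

lemma sum_impact_reassign_add (s : N → M → ℕ) (A : M → N) (i j : N) :
    ∑ g : M, s (reassign A j i g) g + val (s j) (bundle A j) =
      ∑ g : M, s (A g) g + val (s i) (bundle A j) := by
  have hreassign : ∑ g : M, s (reassign A j i g) g =
      val (s i) (bundle A j) + ∑ g ∈ univ.filter (fun g => A g ≠ j), s (A g) g := by
    unfold reassign
    rw [Finset.sum_congr rfl fun g _ => apply_ite (fun k => s k g) (A g = j) i (A g),
      Finset.sum_ite]
    rfl
  rw [hreassign, ← Finset.sum_filter_add_sum_filter_not univ (fun g => A g = j),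
    ← val_bundle_eq_sum_filter]
  ring

theorem SIM.val_le_val [Fintype N] {s : N → M → ℕ} {A : M → N} (hA : SIM s A) (i j : N) :
    val (s i) (bundle A j) ≤ val (s j) (bundle A j) := by
  have hopt := hA (reassign A j i)
  rw [sum_val_bundle, sum_val_bundle] at hopt
  have hmove := sum_impact_reassign_add s A i j
  omega

end Reassign

/-- In every SIM allocation, `s_i(A_j) ≤ s_j(A_j)` for every pair of agents, and
consequently every SIM allocation satisfies, for every pair of agents, the SA-EF
condition with the strict inequality replaced by a non-strict one. -/
theorem sim_impact_le_and_weak_saef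
    [Fintype N] [Fintype M] [DecidableEq N]
    (v s : N → M → ℕ) (A : M → N) (hA : SIM s A) :
    (∀ i j : N, val (s i) (bundle A j) ≤ val (s j) (bundle A j)) ∧
    (∀ i j : N, val (v i) (bundle A i) ≥ val (v i) (bundle A j) ∨
      val (s i) (bundle A j) ≤ val (s j) (bundle A j)) :=
  ⟨hA.val_le_val, fun i j => Or.inr (hA.val_le_val i j)⟩
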